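/- arXiv:2602.01148 — 2 statements merged into one kernel-verified Lean document; each statement's English description precedes it below -/
import Mathlib

section
/- Fix an integer B ≥ 2 and a real constant c > 0. There exist a constant C > 0 and a threshold κ₀ > (B−1)c such that for all κ ≥ κ₀, the Kullback–Leibler divergence from the uniform distribution u on Fin B to the concentrated distribution p̄(κ) satisfies |D(u‖p̄(κ)) − ( ((B−1)/B)·log κ − log B − ((B−1)/B)·log c )| ≤ C/κ. -/
open Real

/-- The concentrated distribution on `Fin B`: mass `1 - (B-1)c/κ` on index `0`
and `c/κ` on each other index. -/
noncomputable def concentratedDist (B : ℕ) (c κ : ℝ) : Fin B → ℝ :=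
  fun i => if i.val = 0 then 1 - (B - 1) * c / κ else c / κ

/-- Kullback–Leibler divergence between probability vectors on `Fin B`
(natural logarithm). -/
noncomputable def klDiv {B : ℕ} (q p : Fin B → ℝ) : ℝ :=
  ∑ i, q i * Real.log (q i / p i)

/-- The uniform distribution on `Fin B`. -/
noncomputable def uniformDist (B : ℕ) : Fin B → ℝ := fun _ => 1 / B

/-! The divergence has the closed form `((B-1)/B) log (κ/c) - log B - (1/B) log (1 - x)` with
`x = (B-1)c/κ`, so the error term is exactly `-(1/B) log (1 - x)`, and `|log (1 - x)| ≤ 2x`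
once `x ≤ 1/2`, i.e. once `κ ≥ 2(B-1)c`. -/

lemma abs_log_one_sub_le_two_mul {x : ℝ} (hx₀ : 0 ≤ x) (hx : x ≤ 1 / 2) :
    |log (1 - x)| ≤ 2 * x := by
  have hpos : 0 < 1 - x := by linarith
  have hlower : 1 - (1 - x)⁻¹ ≤ log (1 - x) := one_sub_inv_le_log_of_pos hpos
  have hinv : (1 - x)⁻¹ ≤ 1 + 2 * x := by
    rw [inv_le_iff_one_le_mul₀ hpos]
    nlinarith
  rw [abs_of_nonpos (log_nonpos hpos.le (by linarith))]
  linarith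

lemma sum_fin_ite_val_eq_zero {B : ℕ} (hB : 0 < B) (a b : ℝ) :
    (∑ i : Fin B, if i.val = 0 then a else b) = a + ((B : ℝ) - 1) * b := by
  obtain ⟨n, rfl⟩ : ∃ n, B = n + 1 := ⟨B - 1, by omega⟩
  simp [Fin.sum_univ_succ]

lemma klDiv_uniformDist_concentratedDist {B : ℕ} (hB : 0 < B) {c κ : ℝ} (hc : c ≠ 0)
    (hκ : κ ≠ 0) (hmass : 1 - (B - 1) * c / κ ≠ 0) :
    klDiv (uniformDist B) (concentratedDist B c κ) =
      ((B - 1 : ℝ) / B) * log κ - log B - ((B - 1 : ℝ) / B) * log c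
        - (1 / B) * log (1 - (B - 1) * c / κ) := by
  have hB' : (B : ℝ) ≠ 0 := by positivity
  have hterm : ∀ i : Fin B, uniformDist B i * log (uniformDist B i / concentratedDist B c κ i) =
      if i.val = 0 then (1 / B) * (-log B - log (1 - (B - 1) * c / κ))
      else (1 / B) * (-log B - (log c - log κ)) := by
    intro i
    simp only [uniformDist, concentratedDist, one_div]
    split_ifs
    · rw [log_div (inv_ne_zero hB') hmass, log_inv]
    · rw [log_div (inv_ne_zero hB') (div_ne_zero hc hκ), log_inv, log_div hc hκ]
  rw [klDiv, Finset.sum_congr rfl fun i _ => hterm i, sum_fin_ite_val_eq_zero hB]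
  field_simp
  ring

/-- asymptotic expansion of the KL divergence from the uniform
distribution to the concentrated distribution, with `O(1/κ)` error. -/
theorem klDiv_uniform_concentrated_asymptotic (B : ℕ) (hB : 2 ≤ B) (c : ℝ) (hc : 0 < c) :
    ∃ C > 0, ∃ κ₀ > (B - 1 : ℝ) * c, ∀ κ ≥ κ₀,
      |klDiv (uniformDist B) (concentratedDist B c κ) -
        (((B - 1 : ℝ) / B) * Real.log κ - Real.log B - ((B - 1 : ℝ) / B) * Real.log c)|
        ≤ C / κ := by
  have hB₀ : (0 : ℝ) < B := by positivity
  have hd : 0 < ((B : ℝ) - 1) * c := mul_pos (by norm_num; omega) hc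
  refine ⟨2 * ((B - 1) * c) / B, by positivity, 2 * ((B - 1) * c), by linarith, fun κ hκ => ?_⟩
  have hκ₀ : 0 < κ := by linarith
  set x := ((B : ℝ) - 1) * c / κ with hx
  have hx₀ : 0 < x := div_pos hd hκ₀
  have hx_le : x ≤ 1 / 2 := by rw [hx, div_le_iff₀ hκ₀]; linarith
  rw [klDiv_uniformDist_concentratedDist (by omega) hc.ne' hκ₀.ne' (by linarith), sub_sub_cancel_left,
    abs_neg, abs_mul, abs_of_pos (by positivity : (0 : ℝ) < 1 / B)]
  calc 1 / (B : ℝ) * |log (1 - x)| ≤ 1 / B * (2 * x) := by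
        gcongr; exact abs_log_one_sub_le_two_mul hx₀.le hx_le
    _ = 2 * ((B - 1) * c) / B / κ := by rw [hx]; field_simp
end

section
/- Let (Ω, 𝓕, μ) be a probability space, d ≥ 1 and M ≥ 1 natural numbers, E = EuclideanSpace ℝ (Fin d), and f : E → E a Lipschitz map with constant L ≥ 0. Let ε_1, …, ε_M : Ω → E be an independent family of measurable, square-integrable random vectors, each with mean zero (∫ ε_k dμ = 0) and common second moment ∫ ‖ε_k‖² dμ = d·σ_h² for some σ_h ≥ 0. Define the clean orbit h*_0 ∈ E, h*_k = f(h*_{k−1}), and the noisy orbit h_0 = h*_0 (constant), h_k(ω) = f(h_{k−1}(ω)) + ε_k(ω). Then the expected squared final-state error satisfies ∫ ‖h_M − h*_M‖² dμ ≤ d·σ_h² · ∑_{i=0}^{M−1} L^{2i}; in particular, when L ≠ 1 the right-hand side equals ((1 − L^{2M})/(1 − L²))·d·σ_h², and when L = 1 it equals M·d·σ_h². -/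
/-! Write `e k = h k - h*_k`, so that `e (k+1) = (f (h k) - f (h*_k)) + ε (k+1)`. The state `h k`
is a measurable function of `ε 1, …, ε k`, hence independent of the mean-zero noise `ε (k+1)`;
the cross term in `‖e (k+1)‖²` therefore has expectation zero, and the Lipschitz bound gives
`E‖e (k+1)‖² ≤ L² E‖e k‖² + d σ_h²`. Unrolling this from `e 0 = 0` yields the geometric sum. -/

open MeasureTheory ProbabilityTheory Finset

noncomputable def noisyOrbit {d : ℕ} {Ω : Type*}
    (f : EuclideanSpace ℝ (Fin d) → EuclideanSpace ℝ (Fin d))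
    (h0 : EuclideanSpace ℝ (Fin d)) (ε : ℕ → Ω → EuclideanSpace ℝ (Fin d)) :
    ℕ → Ω → EuclideanSpace ℝ (Fin d)
  | 0 => fun _ => h0
  | (k + 1) => fun ω => f (noisyOrbit f h0 ε k ω) + ε (k + 1) ω

open scoped RealInnerProductSpace NNReal

theorem LipschitzWith.memLp_comp {Ω E F : Type*} [MeasurableSpace Ω] {μ : Measure Ω}
    [IsFiniteMeasure μ] [NormedAddCommGroup E] [NormedAddCommGroup F] {p : ENNReal} {K : ℝ≥0}
    {f : E → F} (hf : LipschitzWith K f) {X : Ω → E} (hX : MemLp X p μ) :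
    MemLp (fun ω => f (X ω)) p μ := by
  have hf₀ : LipschitzWith K (fun x => f x - f 0) :=
    (hf.sub (LipschitzWith.const (f 0))).weaken (by simp)
  convert (hf₀.comp_memLp (by simp) hX).add (memLp_const (f 0)) using 1
  ext ω
  simp

section IndependentNoise

variable {Ω E : Type*} [MeasurableSpace Ω] {μ : Measure Ω} [IsFiniteMeasure μ]
  [NormedAddCommGroup E] [InnerProductSpace ℝ E] [CompleteSpace E]
  [MeasurableSpace E] [BorelSpace E] {X Y : Ω → E}

theorem ProbabilityTheory.IndepFun.integral_norm_add_sq (hXY : IndepFun X Y μ)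
    (hX : MemLp X 2 μ) (hY : MemLp Y 2 μ) (hY₀ : μ[Y] = 0) :
    ∫ ω, ‖X ω + Y ω‖ ^ 2 ∂μ = ∫ ω, ‖X ω‖ ^ 2 ∂μ + ∫ ω, ‖Y ω‖ ^ 2 ∂μ := by
  have hX₁ := hX.integrable one_le_two
  have hY₁ := hY.integrable one_le_two
  have hinner : ∫ ω, ⟪X ω, Y ω⟫ ∂μ = 0 := by
    have := hXY.integral_bilin hX₁ hY₁ (innerSL ℝ)
    rwa [hY₀, map_zero] at this
  have hinner_int : Integrable (fun ω => ⟪X ω, Y ω⟫) μ :=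
    hXY.integrable_bilin hX₁ hY₁ (innerSL ℝ)
  have hX₂ := hX.integrable_norm_pow two_ne_zero
  simp_rw [norm_add_sq_real]
  rw [integral_add, integral_add hX₂ (hinner_int.const_mul 2), integral_const_mul, hinner,
    mul_zero, add_zero]
  exacts [hX₂.add (hinner_int.const_mul 2), hY.integrable_norm_pow two_ne_zero]

theorem integral_norm_comp_add_sub_sq_le {K : ℝ≥0} {f : E → E} (hf : LipschitzWith K f) (c : E)
    (hXY : IndepFun X Y μ) (hX : MemLp X 2 μ) (hY : MemLp Y 2 μ) (hY₀ : μ[Y] = 0) :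
    ∫ ω, ‖f (X ω) + Y ω - f c‖ ^ 2 ∂μ
      ≤ K ^ 2 * ∫ ω, ‖X ω - c‖ ^ 2 ∂μ + ∫ ω, ‖Y ω‖ ^ 2 ∂μ := by
  have hfX : MemLp (fun ω => f (X ω) - f c) 2 μ := (hf.memLp_comp hX).sub (memLp_const _)
  have hfXY : IndepFun (fun ω => f (X ω) - f c) Y μ :=
    hXY.comp (hf.continuous.measurable.sub_const _) measurable_id
  calc ∫ ω, ‖f (X ω) + Y ω - f c‖ ^ 2 ∂μ = ∫ ω, ‖(f (X ω) - f c) + Y ω‖ ^ 2 ∂μ := by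
        simp_rw [add_sub_right_comm]
    _ = ∫ ω, ‖f (X ω) - f c‖ ^ 2 ∂μ + ∫ ω, ‖Y ω‖ ^ 2 ∂μ := hfXY.integral_norm_add_sq hfX hY hY₀
    _ ≤ K ^ 2 * ∫ ω, ‖X ω - c‖ ^ 2 ∂μ + ∫ ω, ‖Y ω‖ ^ 2 ∂μ := by
        rw [← integral_const_mul]
        refine add_le_add_left (integral_mono (hfX.integrable_norm_pow two_ne_zero)
          (((hX.sub (memLp_const c)).integrable_norm_pow two_ne_zero).const_mul _) fun ω => ?_) _
        rw [← mul_pow]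
        gcongr
        exact hf.norm_sub_le _ _

end IndependentNoise

theorem le_mul_geom_sum_of_le_mul_add {e : ℕ → ℝ} {a b : ℝ} {n : ℕ} (ha : 0 ≤ a) (he₀ : e 0 = 0)
    (he : ∀ k < n, e (k + 1) ≤ a * e k + b) : e n ≤ b * ∑ i ∈ range n, a ^ i := by
  induction n with
  | zero => simp [he₀]
  | succ n ih =>
    calc e (n + 1) ≤ a * e n + b := he n n.lt_succ_self
      _ ≤ a * (b * ∑ i ∈ range n, a ^ i) + b := by
        gcongr
        exact ih fun k hk => he k (hk.trans n.lt_succ_self)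
      _ = b * ∑ i ∈ range (n + 1), a ^ i := by rw [geom_sum_succ]; ring

section NoisyOrbit

variable {Ω : Type*} {d M : ℕ}
  {f : EuclideanSpace ℝ (Fin d) → EuclideanSpace ℝ (Fin d)} {h0 : EuclideanSpace ℝ (Fin d)}
  {ε : ℕ → Ω → EuclideanSpace ℝ (Fin d)}

abbrev noiseHistory {β : Type*} [MeasurableSpace β] (ε : ℕ → Ω → β) (M k : ℕ) : MeasurableSpace Ω :=
  ⨆ i ∈ {i : Fin M | (i : ℕ) < k}, MeasurableSpace.comap (ε (i + 1)) inferInstance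

theorem measurable_noisyOrbit_noiseHistory (hf : Measurable f) {k : ℕ} (hk : k ≤ M) :
    Measurable[noiseHistory ε M k] (noisyOrbit f h0 ε k) := by
  induction k with
  | zero => exact measurable_const
  | succ k ih =>
    have hpast : noiseHistory ε M k ≤ noiseHistory ε M (k + 1) :=
      biSup_mono fun i (hi : (i : ℕ) < k) => (hi.trans k.lt_succ_self :)
    have hnew : MeasurableSpace.comap (ε (k + 1)) inferInstance ≤ noiseHistory ε M (k + 1) :=
      le_biSup (fun i : Fin M => MeasurableSpace.comap (ε (i + 1)) inferInstance)
        (show (⟨k, hk⟩ : Fin M) ∈ {i : Fin M | (i : ℕ) < k + 1} from k.lt_succ_self)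
    exact (hf.comp ((ih (k.le_succ.trans hk)).mono hpast le_rfl)).add
      ((comap_measurable (ε (k + 1))).mono hnew le_rfl)

theorem indepFun_noisyOrbit [MeasurableSpace Ω] {μ : Measure Ω} (hf : Measurable f)
    (hε : ∀ i : Fin M, Measurable (ε (i + 1)))
    (hindep : iIndepFun (fun i : Fin M => ε (i + 1)) μ) {k : ℕ} (hk : k < M) :
    IndepFun (noisyOrbit f h0 ε k) (ε (k + 1)) μ := by
  have hpast_future := indep_iSup_of_disjoint (fun i => (hε i).comap_le) hindep.iIndep
    (S := {i : Fin M | (i : ℕ) < k}) (T := {⟨k, hk⟩}) (by simp)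
  rw [_root_.iSup_singleton] at hpast_future
  rw [IndepFun_iff_Indep]
  exact indep_of_indep_of_le_left hpast_future
    (measurable_noisyOrbit_noiseHistory hf hk.le).comap_le

theorem memLp_noisyOrbit [MeasurableSpace Ω] {μ : Measure Ω} [IsFiniteMeasure μ] {K : ℝ≥0}
    (hf : LipschitzWith K f) (hε : ∀ k < M, MemLp (ε (k + 1)) 2 μ) {k : ℕ} (hk : k ≤ M) :
    MemLp (noisyOrbit f h0 ε k) 2 μ := by
  induction k with
  | zero => exact memLp_const h0
  | succ k ih => exact (hf.memLp_comp (ih (k.le_succ.trans hk))).add (hε k hk)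

end NoisyOrbit

theorem latent_compounding_error_general
    {Ω : Type*} [MeasurableSpace Ω] (μ : Measure Ω) [IsProbabilityMeasure μ]
    (d M : ℕ)
    (f : EuclideanSpace ℝ (Fin d) → EuclideanSpace ℝ (Fin d))
    (L : ℝ) (hL : 0 ≤ L)
    (hf : ∀ x y, ‖f x - f y‖ ≤ L * ‖x - y‖)
    (ε : ℕ → Ω → EuclideanSpace ℝ (Fin d))
    (σh : ℝ)
    (hmeas : ∀ k, 1 ≤ k → k ≤ M → Measurable (ε k))
    (hL2 : ∀ k, 1 ≤ k → k ≤ M → MemLp (ε k) 2 μ)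
    (hmean : ∀ k, 1 ≤ k → k ≤ M → ∫ ω, ε k ω ∂μ = 0)
    (hvar : ∀ k, 1 ≤ k → k ≤ M → ∫ ω, ‖ε k ω‖ ^ 2 ∂μ = d * σh ^ 2)
    (hindep : iIndepFun (fun k : Fin M => ε (k.1 + 1)) μ)
    (h0 : EuclideanSpace ℝ (Fin d)) :
    (∫ ω, ‖noisyOrbit f h0 ε M ω - f^[M] h0‖ ^ 2 ∂μ
        ≤ d * σh ^ 2 * ∑ i ∈ Finset.range M, L ^ (2 * i)) ∧
    (L ≠ 1 → d * σh ^ 2 * ∑ i ∈ Finset.range M, L ^ (2 * i)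
        = (1 - L ^ (2 * M)) / (1 - L ^ 2) * (d * σh ^ 2)) ∧
    (L = 1 → d * σh ^ 2 * ∑ i ∈ Finset.range M, L ^ (2 * i) = M * (d * σh ^ 2)) := by
  have hfL : LipschitzWith ⟨L, hL⟩ f :=
    LipschitzWith.of_dist_le_mul fun x y => by rw [dist_eq_norm, dist_eq_norm]; exact hf x y
  simp_rw [pow_mul]
  refine ⟨le_mul_geom_sum_of_le_mul_add
      (e := fun k => ∫ ω, ‖noisyOrbit f h0 ε k ω - f^[k] h0‖ ^ 2 ∂μ) (sq_nonneg L)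
      (by simp [noisyOrbit]) fun k hk => ?_, fun hL1 => ?_, fun hL1 => by simp [hL1, mul_comm]⟩
  · rw [Function.iterate_succ_apply', ← hvar (k + 1) k.succ_pos hk]
    exact integral_norm_comp_add_sub_sq_le hfL _
      (indepFun_noisyOrbit hfL.continuous.measurable (fun i => hmeas _ i.1.succ_pos i.2) hindep hk)
      (memLp_noisyOrbit hfL (fun j hj => hL2 _ j.succ_pos hj) hk.le) (hL2 _ k.succ_pos hk)
      (hmean _ k.succ_pos hk)
  · have hL2ne : L ^ 2 ≠ 1 := by rwa [Ne, pow_eq_one_iff_of_nonneg hL two_ne_zero]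
    rw [geom_sum_eq hL2ne, mul_comm, ← neg_div_neg_eq, neg_sub, neg_sub]

/-- Compounding error in latent computation: the expected squared
final-state error of the noisy orbit relative to the clean orbit `f^[M] h0` is at most
`d·σ_h² · ∑_{i<M} L^{2i}`, which equals `((1−L^{2M})/(1−L²))·d·σ_h²` when `L ≠ 1` and
`M·d·σ_h²` when `L = 1`. -/
theorem latent_compounding_error
    {Ω : Type*} [MeasurableSpace Ω] (μ : Measure Ω) [IsProbabilityMeasure μ]
    (d M : ℕ) (hd : 1 ≤ d) (hM : 1 ≤ M)
    (f : EuclideanSpace ℝ (Fin d) → EuclideanSpace ℝ (Fin d))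
    (L : ℝ) (hL : 0 ≤ L)
    (hf : ∀ x y, ‖f x - f y‖ ≤ L * ‖x - y‖)
    (ε : ℕ → Ω → EuclideanSpace ℝ (Fin d))
    (σh : ℝ) (hσh : 0 ≤ σh)
    (hmeas : ∀ k, 1 ≤ k → k ≤ M → Measurable (ε k))
    (hL2 : ∀ k, 1 ≤ k → k ≤ M → MemLp (ε k) 2 μ)
    (hmean : ∀ k, 1 ≤ k → k ≤ M → ∫ ω, ε k ω ∂μ = 0)
    (hvar : ∀ k, 1 ≤ k → k ≤ M → ∫ ω, ‖ε k ω‖ ^ 2 ∂μ = d * σh ^ 2)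
    (hindep : iIndepFun (fun k : Fin M => ε (k.1 + 1)) μ)
    (h0 : EuclideanSpace ℝ (Fin d)) :
    (∫ ω, ‖noisyOrbit f h0 ε M ω - f^[M] h0‖ ^ 2 ∂μ
        ≤ d * σh ^ 2 * ∑ i ∈ Finset.range M, L ^ (2 * i)) ∧
    (L ≠ 1 → d * σh ^ 2 * ∑ i ∈ Finset.range M, L ^ (2 * i)
        = (1 - L ^ (2 * M)) / (1 - L ^ 2) * (d * σh ^ 2)) ∧
    (L = 1 → d * σh ^ 2 * ∑ i ∈ Finset.range M, L ^ (2 * i) = M * (d * σh ^ 2)) :=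
  latent_compounding_error_general μ d M f L hL hf ε σh hmeas hL2 hmean hvar hindep h0
end
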